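/- arXiv:2211.12393 — 3 statements merged into one kernel-verified Lean document; each statement's English description precedes it below -/
import Mathlib

section
/- Let T > 0, ε ∈ (0,1), and let ũ : [-1,1] → ℝ be a C¹ function with ũ(x) ∈ [1-ε, 1+ε] for x < -ε and ũ(x) ∈ [-1-ε, -1+ε] for x > ε. Then the L¹ norm of the Burgers residual f(ũ)_x with f(u) = u²/2 over (0,T) × (-ε, ε) is at least T(1-ε)². -/
open intervalIntegral Set

/- The flux `g = ũ²/2` is at least `(1-ε)²/2` at both ends of `[-ε, ε]` and vanishes at a zero
`c` of `ũ` in between, so the variation `∫ |g'|` over `[-ε, c]` and over `[c, ε]` is each at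
least `(1-ε)²/2`. The residual does not depend on `t`, so integrating over `(0, T)` multiplies
the bound by `T`. -/

theorem Continuous.mapsTo_Icc_of_mapsTo_Ioo {f : ℝ → ℝ} (hf : Continuous f) {a b : ℝ}
    (hab : a < b) {s : Set ℝ} (hs : IsClosed s) (h : MapsTo f (Ioo a b) s) :
    MapsTo f (Icc a b) s := by
  simpa [closure_Ioo hab.ne, hs.closure_eq] using h.closure hf

theorem abs_sub_le_integral_abs_deriv {g : ℝ → ℝ} (hg : ContDiff ℝ 1 g) {a b : ℝ}
    (hab : a ≤ b) : |g b - g a| ≤ ∫ x in a..b, |deriv g x| := by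
  have hcont : Continuous (deriv g) := hg.continuous_deriv le_rfl
  rw [← integral_deriv_eq_sub (fun x _ => hg.differentiable one_ne_zero x)
    (hcont.intervalIntegrable a b)]
  exact abs_integral_le_integral_abs hab

theorem abs_add_abs_le_integral_abs_deriv {g : ℝ → ℝ} (hg : ContDiff ℝ 1 g) {a b c : ℝ}
    (hc : c ∈ Icc a b) (hgc : g c = 0) : |g a| + |g b| ≤ ∫ x in a..b, |deriv g x| := by
  have hint : ∀ x y : ℝ, IntervalIntegrable (fun x => |deriv g x|) MeasureTheory.volume x y :=
    fun x y => (hg.continuous_deriv le_rfl).abs.intervalIntegrable x y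
  have hleft := abs_sub_le_integral_abs_deriv hg hc.1
  have hright := abs_sub_le_integral_abs_deriv hg hc.2
  rw [hgc, zero_sub, abs_neg] at hleft
  rw [hgc, sub_zero] at hright
  rw [← integral_add_adjacent_intervals (hint a c) (hint c b)]
  exact add_le_add hleft hright

/-- L¹ lower bound `T(1-ε)²` for the Burgers residual of a
time-independent smoothed standing-shock profile over `(0,T) × (-ε,ε)`. -/
theorem stmt_0 (T ε : ℝ) (hT : 0 < T) (hε : ε ∈ Set.Ioo (0:ℝ) 1)
    (u : ℝ → ℝ) (hu : ContDiff ℝ 1 u)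
    (hleft : ∀ x ∈ Set.Icc (-1:ℝ) 1, x < -ε → u x ∈ Set.Icc (1 - ε) (1 + ε))
    (hright : ∀ x ∈ Set.Icc (-1:ℝ) 1, ε < x → u x ∈ Set.Icc (-1 - ε) (-1 + ε)) :
    T * (1 - ε)^2 ≤
      ∫ _t in (0:ℝ)..T, ∫ x in (-ε)..ε, |deriv (fun y => (u y)^2 / 2) x| := by
  obtain ⟨hε0, hε1⟩ := hε
  have hu_left : 1 - ε ≤ u (-ε) :=
    (hu.continuous.mapsTo_Icc_of_mapsTo_Ioo (by linarith) isClosed_Icc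
      (fun x hx => hleft x ⟨hx.1.le, by linarith [hx.2]⟩ hx.2) ⟨by linarith, le_rfl⟩).1
  have hu_right : u ε ≤ -1 + ε :=
    (hu.continuous.mapsTo_Icc_of_mapsTo_Ioo (by linarith) isClosed_Icc
      (fun x hx => hright x ⟨by linarith [hx.1], hx.2.le⟩ hx.1) ⟨le_rfl, by linarith⟩).2
  obtain ⟨c, hc, huc⟩ : ∃ c ∈ Icc (-ε) ε, u c = 0 :=
    intermediate_value_Icc' (by linarith) hu.continuous.continuousOn ⟨by linarith, by linarith⟩
  have hvariation := abs_add_abs_le_integral_abs_deriv ((hu.pow 2).div_const 2) hc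
    (by simp [huc])
  have hflux_left : (1 - ε)^2 / 2 ≤ |u (-ε) ^ 2 / 2| := by
    rw [abs_of_nonneg (by positivity)]; nlinarith
  have hflux_right : (1 - ε)^2 / 2 ≤ |u ε ^ 2 / 2| := by
    rw [abs_of_nonneg (by positivity)]; nlinarith
  rw [integral_const, sub_zero, smul_eq_mul]
  exact mul_le_mul_of_nonneg_left (by linarith) hT.le
end

section
/- Let ε ∈ (0,1), T > 0, s : [0,T] → ℝ be smooth, and let ũ : ℝ → ℝ be a C¹ profile satisfying ũ(x) ∈ [1-ε,1+ε] for x < -ε and ũ(x) ∈ [-1-ε,-1+ε] for x > ε. Consider the traveling approximation w(t,x) := ũ(x - s(t)) with velocity v := s'. Then ∫₀ᵀ ∫_{-ε+s(t)}^{ε+s(t)} |(w²/2)_x + w_t| dx dt ≥ (T/2)(1-ε)² + (1-ε) ‖v‖_{L¹(0,T)}. -/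
/-- L¹ lower bound for the Burgers residual of a rigidly
translated smoothed shock profile `w(t,x) = ũ(x - s(t))`. -/
theorem stmt_2 (T ε : ℝ) (hT : 0 < T) (hε : ε ∈ Set.Ioo (0:ℝ) 1)
    (s : ℝ → ℝ) (hs : ContDiff ℝ (⊤ : ℕ∞) s)
    (u : ℝ → ℝ) (hu : ContDiff ℝ 1 u)
    (hleft : ∀ x : ℝ, x < -ε → u x ∈ Set.Icc (1 - ε) (1 + ε))
    (hright : ∀ x : ℝ, ε < x → u x ∈ Set.Icc (-1 - ε) (-1 + ε))
    (w : ℝ → ℝ → ℝ) (hw : ∀ t x, w t x = u (x - s t))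
    (v : ℝ → ℝ) (hv : ∀ t, v t = deriv s t) :
    T / 2 * (1 - ε)^2 + (1 - ε) * ∫ t in (0:ℝ)..T, |v t| ≤
      ∫ t in (0:ℝ)..T, ∫ x in (-ε + s t)..(ε + s t),
        |deriv (fun y => (w t y)^2 / 2) x + deriv (fun τ => w τ x) t| := by
  obtain ⟨hε0, hε1⟩ := hε
  have hud : Differentiable ℝ u := hu.differentiable one_ne_zero
  have hu'c : Continuous (deriv u) := hu.continuous_deriv le_rfl
  have hsd : Differentiable ℝ s := hs.differentiable (by simp)
  have hvs : v = deriv s := funext hv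
  have hvc : Continuous v := by rw [hvs]; exact hs.continuous_deriv (by simp)
  -- boundary values
  have hA : 1 - ε ≤ u (-ε) := by
    have ht : Filter.Tendsto u (nhdsWithin (-ε) (Set.Iio (-ε))) (nhds (u (-ε))) :=
      (hud.continuous.tendsto _).mono_left nhdsWithin_le_nhds
    refine ge_of_tendsto ht ?_
    filter_upwards [self_mem_nhdsWithin] with x hx
    exact (hleft x hx).1
  have hB : u ε ≤ -(1 - ε) := by
    have ht : Filter.Tendsto u (nhdsWithin ε (Set.Ioi ε)) (nhds (u ε)) :=
      (hud.continuous.tendsto _).mono_left nhdsWithin_le_nhds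
    have := le_of_tendsto ht (by
      filter_upwards [self_mem_nhdsWithin] with x hx
      exact (hright x hx).2)
    linarith
  -- a zero of u inside [-ε, ε]
  have hεε : (-ε : ℝ) ≤ ε := by linarith
  obtain ⟨c, hc, hc0⟩ : ∃ c ∈ Set.Icc (-ε) ε, u c = 0 := by
    have h0 : (0:ℝ) ∈ Set.Icc (u ε) (u (-ε)) := ⟨by linarith, by linarith⟩
    obtain ⟨c, hc, hc0⟩ := intermediate_value_Icc' hεε hud.continuous.continuousOn h0
    exact ⟨c, hc, hc0⟩
  -- key pointwise lower bound
  have key : ∀ r : ℝ, (1 - ε)^2 / 2 + (1 - ε) * |r| ≤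
      ∫ y in (-ε)..ε, |(u y - r) * deriv u y| := by
    intro r
    set G : ℝ → ℝ := fun y => u y * u y / 2 - r * u y with hG
    have hGd : ∀ y, HasDerivAt G ((u y - r) * deriv u y) y := by
      intro y
      have h1 := (hud y).hasDerivAt
      have h2 := ((h1.mul h1).div_const 2).sub (h1.const_mul r)
      exact h2.congr_deriv (by ring)
    have hcont : Continuous fun y => (u y - r) * deriv u y :=
      (hud.continuous.sub continuous_const).mul hu'c
    have hftc : ∀ a b : ℝ, (∫ y in a..b, (u y - r) * deriv u y) = G b - G a := fun a b =>
      intervalIntegral.integral_eq_sub_of_hasDerivAt (fun y _ => hGd y)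
        (hcont.intervalIntegrable a b)
    have habs : ∀ a b : ℝ, a ≤ b → |G b - G a| ≤ ∫ y in a..b, |(u y - r) * deriv u y| := by
      intro a b hab
      rw [← hftc a b]
      exact intervalIntegral.abs_integral_le_integral_abs hab
    have hGc : G c = 0 := by simp [hG, hc0]
    have hsplit : (∫ y in (-ε)..ε, |(u y - r) * deriv u y|) =
        (∫ y in (-ε)..c, |(u y - r) * deriv u y|) +
        ∫ y in c..ε, |(u y - r) * deriv u y| :=
      (intervalIntegral.integral_add_adjacent_intervals
        (hcont.abs.intervalIntegrable _ _) (hcont.abs.intervalIntegrable _ _)).symm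
    have hn1 : 0 ≤ ∫ y in (-ε)..c, |(u y - r) * deriv u y| :=
      intervalIntegral.integral_nonneg hc.1 (fun y _ => abs_nonneg _)
    have hn2 : 0 ≤ ∫ y in c..ε, |(u y - r) * deriv u y| :=
      intervalIntegral.integral_nonneg hc.2 (fun y _ => abs_nonneg _)
    rcases le_total r 0 with hr | hr
    · -- use left endpoint
      have h1 : |G c - G (-ε)| ≤ ∫ y in (-ε)..c, |(u y - r) * deriv u y| := habs _ _ hc.1
      have h2 : (1 - ε)^2 / 2 + (1 - ε) * |r| ≤ G (-ε) := by
        have h3 : |r| = -r := abs_of_nonpos hr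
        simp only [hG]
        nlinarith [hA, abs_nonneg r]
      have h4 : G (-ε) ≤ |G c - G (-ε)| := by
        rw [hGc]
        calc G (-ε) ≤ |G (-ε)| := le_abs_self _
        _ = |0 - G (-ε)| := by rw [zero_sub, abs_neg]
      calc (1 - ε)^2 / 2 + (1 - ε) * |r| ≤ G (-ε) := h2
        _ ≤ |G c - G (-ε)| := h4
        _ ≤ ∫ y in (-ε)..c, |(u y - r) * deriv u y| := h1
        _ ≤ (∫ y in (-ε)..c, |(u y - r) * deriv u y|)
            + ∫ y in c..ε, |(u y - r) * deriv u y| := le_add_of_nonneg_right hn2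
        _ = _ := hsplit.symm
    · -- use right endpoint
      have h1 : |G ε - G c| ≤ ∫ y in c..ε, |(u y - r) * deriv u y| := habs _ _ hc.2
      have h2 : (1 - ε)^2 / 2 + (1 - ε) * |r| ≤ G ε := by
        have h3 : |r| = r := abs_of_nonneg hr
        simp only [hG]
        nlinarith [hB, abs_nonneg r]
      have h4 : G ε ≤ |G ε - G c| := by
        rw [hGc, sub_zero]
        exact le_abs_self _
      calc (1 - ε)^2 / 2 + (1 - ε) * |r| ≤ G ε := h2
        _ ≤ |G ε - G c| := h4
        _ ≤ ∫ y in c..ε, |(u y - r) * deriv u y| := h1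
        _ ≤ (∫ y in (-ε)..c, |(u y - r) * deriv u y|)
            + ∫ y in c..ε, |(u y - r) * deriv u y| := le_add_of_nonneg_left hn1
        _ = _ := hsplit.symm
  -- rewrite the inner integral
  have hinner : ∀ t : ℝ,
      (∫ x in (-ε + s t)..(ε + s t),
        |deriv (fun y => (w t y)^2 / 2) x + deriv (fun τ => w τ x) t|) =
      ∫ y in (-ε)..ε, |(u y - v t) * deriv u y| := by
    intro t
    have hint : ∀ x : ℝ,
        |deriv (fun y => (w t y)^2 / 2) x + deriv (fun τ => w τ x) t| =
        (fun z => |(u z - v t) * deriv u z|) (x - s t) := by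
      intro x
      have h1 : HasDerivAt (fun y : ℝ => y - s t) 1 x := (hasDerivAt_id x).sub_const _
      have h2 : HasDerivAt (fun y => u (y - s t)) (deriv u (x - s t) * 1) x :=
        (hud _).hasDerivAt.comp x h1
      have h3 : HasDerivAt (fun y => (u (y - s t))^2 / 2)
          ((↑2 * u (x - s t) ^ 1 * (deriv u (x - s t) * 1)) / 2) x := (h2.pow 2).div_const 2
      have h4 : HasDerivAt (fun τ : ℝ => x - s τ) (-(deriv s t)) t :=
        (hsd t).hasDerivAt.const_sub x
      have h5 : HasDerivAt (fun τ => u (x - s τ)) (deriv u (x - s t) * -(deriv s t)) t :=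
        (hud _).hasDerivAt.comp t h4
      have e1 : deriv (fun y => (w t y)^2 / 2) x
          = (↑2 * u (x - s t) ^ 1 * (deriv u (x - s t) * 1)) / 2 := by
        simp only [hw]; exact h3.deriv
      have e2 : deriv (fun τ => w τ x) t = deriv u (x - s t) * -(deriv s t) := by
        simp only [hw]; exact h5.deriv
      rw [e1, e2, hv t]
      congr 1
      ring
    calc (∫ x in (-ε + s t)..(ε + s t),
        |deriv (fun y => (w t y)^2 / 2) x + deriv (fun τ => w τ x) t|)
        = ∫ x in (-ε + s t)..(ε + s t), (fun z => |(u z - v t) * deriv u z|) (x - s t) :=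
          intervalIntegral.integral_congr (fun x _ => hint x)
      _ = ∫ y in (-ε + s t - s t)..(ε + s t - s t), |(u y - v t) * deriv u y| :=
          intervalIntegral.integral_comp_sub_right (fun z => |(u z - v t) * deriv u z|) (s t)
      _ = ∫ y in (-ε)..ε, |(u y - v t) * deriv u y| := by norm_num
  -- outer comparison
  have hJc : Continuous fun t => ∫ y in (-ε)..ε, |(u y - v t) * deriv u y| := by
    apply intervalIntegral.continuous_parametric_intervalIntegral_of_continuous'
    exact (((hud.continuous.comp continuous_snd).sub
      (hvc.comp continuous_fst)).mul (hu'c.comp continuous_snd)).abs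
  have hφc : Continuous fun t => (1 - ε)^2 / 2 + (1 - ε) * |v t| :=
    continuous_const.add (continuous_const.mul hvc.abs)
  have hmono : (∫ t in (0:ℝ)..T, ((1 - ε)^2 / 2 + (1 - ε) * |v t|)) ≤
      ∫ t in (0:ℝ)..T, ∫ y in (-ε)..ε, |(u y - v t) * deriv u y| := by
    apply intervalIntegral.integral_mono_on hT.le
      (hφc.intervalIntegrable _ _) (hJc.intervalIntegrable _ _)
    intro t _
    exact key (v t)
  have hsum : (∫ t in (0:ℝ)..T, ((1 - ε)^2 / 2 + (1 - ε) * |v t|)) =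
      T / 2 * (1 - ε)^2 + (1 - ε) * ∫ t in (0:ℝ)..T, |v t| := by
    rw [intervalIntegral.integral_add (g := fun t => (1 - ε) * |v t|) (intervalIntegrable_const)
      ((continuous_const.mul hvc.abs).intervalIntegrable _ _),
      intervalIntegral.integral_const, intervalIntegral.integral_const_mul]
    simp
    ring
  calc T / 2 * (1 - ε)^2 + (1 - ε) * ∫ t in (0:ℝ)..T, |v t|
      = ∫ t in (0:ℝ)..T, ((1 - ε)^2 / 2 + (1 - ε) * |v t|) := hsum.symm
    _ ≤ ∫ t in (0:ℝ)..T, ∫ y in (-ε)..ε, |(u y - v t) * deriv u y| := hmono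
    _ = _ := intervalIntegral.integral_congr (fun t _ => (hinner t).symm)
end

section
/- Let ε ∈ (0,1), T > 0, and let ũ : [0,T] × ℝ → ℝ be C¹ with ũ(t,x) ∈ [1-ε,1+ε] for x < -ε, ũ(t,x) ∈ [-1-ε,-1+ε] for x > ε, and suppose there is a fixed point x̄ ∈ (-ε,ε), independent of t, with ũ(t,x̄) = 0 for all t. Then the L¹ norm of the Burgers residual ũ_t + (ũ²/2)_x over (0,T)×(-ε,ε) is at least T(1-ε)² − 2ε(1+ε). -/
/-!
Multiply the residual `u_t + u u_x` by `β(u)`, where `β = cutoff ε` is a trapezoid with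
`0 ≤ β ≤ 1`, equal to `1` on `[0, 1 - ε]` and supported in `[-ε, 1]`, so that
`|u_t + u u_x| ≥ -β(u) (u_t + u u_x)`. With `Φ' = β` and `Ψ'(s) = s β(s)` both products are
exact derivatives. On `[-ε, x̄]` the flux term integrates in `x` to `Ψ(u(t,x̄)) - Ψ(u(t,-ε))`,
where `Ψ(0) = 0` and `Ψ(u(t,-ε)) ≥ (1 - ε)² / 2`; the transport term integrates in `t` to
`Φ(u(T,x)) - Φ(u(0,x))`, which is at most `1 + ε` because `0 ≤ Φ' ≤ 1` and `Φ` is constant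
off `[-ε, 1]`, even though nothing bounds `u` itself inside `(-ε, ε)`. The half `[x̄, ε]` is
the mirror image under the symmetry `u(t,x) ↦ -u(t,-x)` of the Burgers equation.
-/

open MeasureTheory intervalIntegral Set Function

noncomputable section

def burgersResidual (u : ℝ → ℝ → ℝ) (t x : ℝ) : ℝ :=
  deriv (fun τ => u τ x) t + deriv (fun y => u t y ^ 2 / 2) x

lemma burgersResidual_reflect (u : ℝ → ℝ → ℝ) (t x : ℝ) :
    burgersResidual (fun t x => -u t (-x)) t x = -burgersResidual u t (-x) := by
  simp only [burgersResidual, neg_sq]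
  rw [deriv.fun_neg, deriv_comp_neg (fun y => u t y ^ 2 / 2)]
  ring

section Partials

variable {E : Type*} [NormedAddCommGroup E] [NormedSpace ℝ E] {u : ℝ → ℝ → E}

lemma hasDerivAt_uncurry_left (hu : Differentiable ℝ (uncurry u)) (t x : ℝ) :
    HasDerivAt (fun τ => u τ x) (fderiv ℝ (uncurry u) (t, x) (1, 0)) t :=
  (hu (t, x)).hasFDerivAt.comp_hasDerivAt (f := fun τ => (τ, x)) t
    ((hasDerivAt_id' t).prodMk (hasDerivAt_const t x))

lemma hasDerivAt_uncurry_right (hu : Differentiable ℝ (uncurry u)) (t x : ℝ) :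
    HasDerivAt (u t) (fderiv ℝ (uncurry u) (t, x) (0, 1)) x :=
  (hu (t, x)).hasFDerivAt.comp_hasDerivAt (f := fun y => (t, y)) x
    ((hasDerivAt_const x t).prodMk (hasDerivAt_id' x))

lemma continuous_deriv_uncurry_left (hu : ContDiff ℝ 1 (uncurry u)) :
    Continuous (uncurry fun t x => deriv (fun τ => u τ x) t) := by
  show Continuous fun p : ℝ × ℝ => deriv (fun τ => u τ p.2) p.1
  simp_rw [(hasDerivAt_uncurry_left (hu.differentiable one_ne_zero) _ _).deriv]
  exact (hu.continuous_fderiv one_ne_zero).clm_apply continuous_const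

lemma continuous_deriv_uncurry_right (hu : ContDiff ℝ 1 (uncurry u)) :
    Continuous (uncurry fun t x => deriv (u t) x) := by
  show Continuous fun p : ℝ × ℝ => deriv (u p.1) p.2
  simp_rw [(hasDerivAt_uncurry_right (hu.differentiable one_ne_zero) _ _).deriv]
  exact (hu.continuous_fderiv one_ne_zero).clm_apply continuous_const

end Partials

lemma burgersResidual_eq {u : ℝ → ℝ → ℝ} (hu : Differentiable ℝ (uncurry u)) (t x : ℝ) :
    burgersResidual u t x = deriv (fun τ => u τ x) t + u t x * deriv (u t) x := by
  have hsq := ((hasDerivAt_uncurry_right hu t x).differentiableAt.hasDerivAt.fun_pow 2).div_const 2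
  rw [burgersResidual, hsq.deriv]
  ring

lemma continuous_burgersResidual {u : ℝ → ℝ → ℝ} (hu : ContDiff ℝ 1 (uncurry u)) :
    Continuous (uncurry (burgersResidual u)) := by
  show Continuous fun p : ℝ × ℝ => burgersResidual u p.1 p.2
  simp_rw [burgersResidual_eq (hu.differentiable one_ne_zero)]
  exact (continuous_deriv_uncurry_left hu).add
    (hu.continuous.mul (continuous_deriv_uncurry_right hu))

def cutoff (e v : ℝ) : ℝ := max 0 (min 1 (min ((v + e) / e) ((1 - v) / e)))

section Cutoff

variable {e : ℝ}

@[fun_prop]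
lemma continuous_cutoff (e : ℝ) : Continuous (cutoff e) := by
  unfold cutoff
  fun_prop

lemma cutoff_nonneg (e v : ℝ) : 0 ≤ cutoff e v := le_max_left _ _

lemma cutoff_le_one (e v : ℝ) : cutoff e v ≤ 1 := max_le zero_le_one (min_le_left _ _)

lemma cutoff_eq_one (he : 0 < e) {v : ℝ} (h₀ : 0 ≤ v) (h₁ : v ≤ 1 - e) : cutoff e v = 1 := by
  have hl : 1 ≤ (v + e) / e := by rw [le_div_iff₀ he]; linarith
  have hr : 1 ≤ (1 - v) / e := by rw [le_div_iff₀ he]; linarith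
  rw [cutoff, min_eq_left (le_min hl hr), max_eq_right zero_le_one]

lemma support_cutoff_subset (he : 0 < e) : support (cutoff e) ⊆ Ioc (-e) 1 := by
  intro v hv
  by_contra hout
  refine hv (max_eq_left ?_)
  rcases not_and_or.mp hout with h | h
  · exact (min_le_right _ _).trans <| (min_le_left _ _).trans <|
      div_nonpos_of_nonpos_of_nonneg (by linarith [not_lt.mp h]) he.le
  · exact (min_le_right _ _).trans <| (min_le_right _ _).trans <|
      div_nonpos_of_nonpos_of_nonneg (by linarith [not_le.mp h]) he.le

lemma integral_cutoff_le (he : 0 < e) (v w : ℝ) : ∫ s in v..w, cutoff e s ≤ 1 + e := by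
  rcases le_total v w with hvw | hwv
  · calc ∫ s in v..w, cutoff e s
        ≤ ∫ s in min v (-e)..max w 1, cutoff e s :=
          integral_mono_interval (min_le_left _ _) hvw (le_max_left _ _)
            (ae_of_all _ (cutoff_nonneg e)) ((continuous_cutoff e).intervalIntegrable _ _)
      _ = ∫ s in (-e)..1, cutoff e s := by
          rw [integral_eq_integral_of_support_subset (support_cutoff_subset he),
            integral_eq_integral_of_support_subset ((support_cutoff_subset he).trans
              (Ioc_subset_Ioc (min_le_right _ _) (le_max_right _ _)))]
      _ ≤ ∫ _ in (-e)..1, (1 : ℝ) :=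
          integral_mono_on (by linarith) ((continuous_cutoff e).intervalIntegrable _ _)
            intervalIntegrable_const fun s _ => cutoff_le_one e s
      _ = 1 + e := by simp
  · have := integral_nonneg (μ := volume) hwv fun s _ => cutoff_nonneg e s
    rw [integral_symm]
    linarith

lemma sq_half_le_integral_mul_cutoff (he₀ : 0 < e) (he₁ : e < 1) {z : ℝ} (hz : 1 - e ≤ z) :
    (1 - e) ^ 2 / 2 ≤ ∫ s in 0..z, s * cutoff e s := by
  have hcont : Continuous fun s => s * cutoff e s := continuous_id.mul (continuous_cutoff e)
  calc (1 - e) ^ 2 / 2 = ∫ s in 0..1 - e, s := by simp [integral_id]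
    _ = ∫ s in 0..1 - e, s * cutoff e s := integral_congr fun s hs => by
        rw [uIcc_of_le (by linarith)] at hs
        simp [cutoff_eq_one he₀ hs.1 hs.2]
    _ ≤ ∫ s in 0..z, s * cutoff e s :=
        integral_mono_interval le_rfl (by linarith) hz
          ((ae_restrict_iff' measurableSet_Ioc).2 <| ae_of_all _ fun s hs =>
            mul_nonneg hs.1.le (cutoff_nonneg e s))
          (hcont.intervalIntegrable _ _)

end Cutoff

lemma integral_integral_add_adjacent_intervals {E : Type*} [NormedAddCommGroup E]
    [NormedSpace ℝ E] {F : ℝ → ℝ → E} (hF : Continuous (uncurry F)) (s T a b c : ℝ) :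
    (∫ t in s..T, ∫ x in a..b, F t x) + ∫ t in s..T, ∫ x in b..c, F t x =
      ∫ t in s..T, ∫ x in a..c, F t x := by
  have hFt (t : ℝ) : Continuous (F t) := hF.comp (Continuous.prodMk_right t)
  rw [← integral_add
    ((continuous_parametric_intervalIntegral_of_continuous' hF a b).intervalIntegrable _ _)
    ((continuous_parametric_intervalIntegral_of_continuous' hF b c).intervalIntegrable _ _)]
  exact integral_congr fun t _ =>
    integral_add_adjacent_intervals ((hFt t).intervalIntegrable _ _)
      ((hFt t).intervalIntegrable _ _)

lemma integral_integral_cutoff_mul_deriv_le {u : ℝ → ℝ → ℝ} (hu : ContDiff ℝ 1 (uncurry u))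
    {e : ℝ} (he : 0 < e) (T : ℝ) {a c : ℝ} (hac : a ≤ c) :
    ∫ t in 0..T, ∫ x in a..c, cutoff e (u t x) * deriv (fun τ => u τ x) t ≤
      (c - a) * (1 + e) := by
  have hcont : Continuous (uncurry fun t x => cutoff e (u t x) * deriv (fun τ => u τ x) t) :=
    ((continuous_cutoff e).comp hu.continuous).mul (continuous_deriv_uncurry_left hu)
  have hdiff := hu.differentiable one_ne_zero
  rw [intervalIntegral_intervalIntegral_swap
    (hcont.continuousOn.integrableOn_compact (isCompact_uIcc.prod isCompact_uIcc) |>.mono_set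
      (prod_mono uIoc_subset_uIcc uIoc_subset_uIcc))]
  calc ∫ x in a..c, ∫ t in 0..T, cutoff e (u t x) * deriv (fun τ => u τ x) t
      ≤ ∫ _ in a..c, (1 + e) :=
        integral_mono_on hac
          ((continuous_parametric_intervalIntegral_of_continuous'
            (f := fun x t => cutoff e (u t x) * deriv (fun τ => u τ x) t)
            (hcont.comp continuous_swap) 0 T).intervalIntegrable _ _)
          intervalIntegrable_const fun x _ =>
            (integral_comp_mul_deriv
              (fun t _ => (hasDerivAt_uncurry_left hdiff t x).differentiableAt.hasDerivAt)
              ((continuous_deriv_uncurry_left hu).comp (Continuous.prodMk_left x)).continuousOn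
              (continuous_cutoff e)).trans_le (integral_cutoff_le he _ _)
    _ = (c - a) * (1 + e) := by simp; ring

lemma sq_half_sub_integral_cutoff_mul_le {w g : ℝ → ℝ} (hw : ContDiff ℝ 1 w) (hg : Continuous g)
    {e a c : ℝ} (he₀ : 0 < e) (he₁ : e < 1) (hac : a ≤ c) (ha : 1 - e ≤ w a) (hc : w c = 0) :
    (1 - e) ^ 2 / 2 - ∫ x in a..c, cutoff e (w x) * g x ≤ ∫ x in a..c, |g x + w x * deriv w x| := by
  have hw' : Continuous (deriv w) := hw.continuous_deriv le_rfl
  have hflux : ∫ x in a..c, w x * cutoff e (w x) * deriv w x = -∫ s in 0..w a, s * cutoff e s := by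
    rw [← integral_symm, ← hc]
    exact integral_comp_mul_deriv (fun x _ => (hw.differentiable one_ne_zero x).hasDerivAt)
      hw'.continuousOn (continuous_id.mul (continuous_cutoff e))
  have hpointwise : ∫ x in a..c, (-(cutoff e (w x) * g x) - w x * cutoff e (w x) * deriv w x) ≤
      ∫ x in a..c, |g x + w x * deriv w x| := by
    refine integral_mono_on hac (Continuous.intervalIntegrable (by fun_prop) _ _)
      (Continuous.intervalIntegrable (by fun_prop) _ _) fun x _ => ?_
    have h₀ := cutoff_nonneg e (w x)
    have h₁ := cutoff_le_one e (w x)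
    nlinarith [neg_abs_le (g x + w x * deriv w x), abs_nonneg (g x + w x * deriv w x)]
  rw [integral_sub (Continuous.intervalIntegrable (by fun_prop) _ _)
    (Continuous.intervalIntegrable (by fun_prop) _ _), intervalIntegral.integral_neg,
    hflux] at hpointwise
  linarith [sq_half_le_integral_mul_cutoff he₀ he₁ ha]

theorem le_integral_abs_burgersResidual_of_left_state {u : ℝ → ℝ → ℝ}
    (hu : ContDiff ℝ 1 (uncurry u)) {T e a c : ℝ} (hT : 0 ≤ T) (he₀ : 0 < e) (he₁ : e < 1)
    (hac : a ≤ c) (ha : ∀ t ∈ Icc 0 T, 1 - e ≤ u t a) (hc : ∀ t ∈ Icc 0 T, u t c = 0) :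
    T * (1 - e) ^ 2 / 2 - (c - a) * (1 + e) ≤
      ∫ t in 0..T, ∫ x in a..c, |burgersResidual u t x| := by
  have hdiff := hu.differentiable one_ne_zero
  have hcont : Continuous (uncurry fun t x => cutoff e (u t x) * deriv (fun τ => u τ x) t) :=
    ((continuous_cutoff e).comp hu.continuous).mul (continuous_deriv_uncurry_left hu)
  calc T * (1 - e) ^ 2 / 2 - (c - a) * (1 + e)
      ≤ T * (1 - e) ^ 2 / 2 -
          ∫ t in 0..T, ∫ x in a..c, cutoff e (u t x) * deriv (fun τ => u τ x) t := by
        linarith [integral_integral_cutoff_mul_deriv_le hu he₀ T hac]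
    _ = ∫ t in 0..T,
          ((1 - e) ^ 2 / 2 - ∫ x in a..c, cutoff e (u t x) * deriv (fun τ => u τ x) t) := by
        rw [integral_sub intervalIntegrable_const
          ((continuous_parametric_intervalIntegral_of_continuous' hcont a c).intervalIntegrable
            _ _), intervalIntegral.integral_const, smul_eq_mul]
        ring
    _ ≤ ∫ t in 0..T, ∫ x in a..c, |burgersResidual u t x| := by
        refine integral_mono_on hT
          ((continuous_const.sub (continuous_parametric_intervalIntegral_of_continuous' hcont a c)
            ).intervalIntegrable _ _)
          ((continuous_parametric_intervalIntegral_of_continuous'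
            (continuous_burgersResidual hu).abs a c).intervalIntegrable _ _) fun t ht => ?_
        simp_rw [burgersResidual_eq hdiff]
        exact sq_half_sub_integral_cutoff_mul_le (hu.comp (contDiff_const.prodMk contDiff_id))
          ((continuous_deriv_uncurry_left hu).comp (Continuous.prodMk_right t))
          he₀ he₁ hac (ha t ht) (hc t ht)

theorem le_integral_abs_burgersResidual_of_right_state {u : ℝ → ℝ → ℝ}
    (hu : ContDiff ℝ 1 (uncurry u)) {T e c b : ℝ} (hT : 0 ≤ T) (he₀ : 0 < e) (he₁ : e < 1)
    (hcb : c ≤ b) (hc : ∀ t ∈ Icc 0 T, u t c = 0) (hb : ∀ t ∈ Icc 0 T, u t b ≤ -(1 - e)) :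
    T * (1 - e) ^ 2 / 2 - (b - c) * (1 + e) ≤
      ∫ t in 0..T, ∫ x in c..b, |burgersResidual u t x| := by
  have hv : ContDiff ℝ 1 (uncurry fun t x => -u t (-x)) :=
    (hu.comp (contDiff_fst.prodMk contDiff_snd.neg)).neg
  have key := le_integral_abs_burgersResidual_of_left_state hv hT he₀ he₁ (neg_le_neg hcb)
    (fun t ht => by simp only [neg_neg]; linarith [hb t ht])
    (fun t ht => by simp only [neg_neg, hc t ht, neg_zero])
  convert key using 1
  · ring
  · refine integral_congr fun t _ => ?_
    simp only [burgersResidual_reflect, abs_neg]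
    rw [integral_comp_neg fun x => |burgersResidual u t x|, neg_neg, neg_neg]

lemma le_of_continuousAt_of_forall_lt {f : ℝ → ℝ} {a m : ℝ} (hf : ContinuousAt f a)
    (h : ∀ x < a, m ≤ f x) : m ≤ f a :=
  ge_of_tendsto (hf.tendsto.mono_left nhdsWithin_le_nhds)
    (eventually_nhdsWithin_of_forall (s := Iio a) h)

lemma le_of_continuousAt_of_forall_gt {f : ℝ → ℝ} {a M : ℝ} (hf : ContinuousAt f a)
    (h : ∀ x > a, f x ≤ M) : f a ≤ M :=
  le_of_tendsto (hf.tendsto.mono_left nhdsWithin_le_nhds)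
    (eventually_nhdsWithin_of_forall (s := Ioi a) h)

/-- time-dependent approximations with a fixed (time-independent)
zero `x̄ ∈ (-ε,ε)`: L¹ lower bound `T(1-ε)² - 2ε(1+ε)` for the Burgers residual
over `(0,T) × (-ε,ε)`. -/
theorem stmt_3 (T ε : ℝ) (hT : 0 < T) (hε : ε ∈ Set.Ioo (0:ℝ) 1)
    (u : ℝ → ℝ → ℝ) (hu : ContDiff ℝ 1 (Function.uncurry u))
    (hleft : ∀ t ∈ Set.Icc (0:ℝ) T, ∀ x : ℝ, x < -ε →
      u t x ∈ Set.Icc (1 - ε) (1 + ε))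
    (hright : ∀ t ∈ Set.Icc (0:ℝ) T, ∀ x : ℝ, ε < x →
      u t x ∈ Set.Icc (-1 - ε) (-1 + ε))
    (xbar : ℝ) (hxbar : xbar ∈ Set.Ioo (-ε) ε)
    (hzero : ∀ t ∈ Set.Icc (0:ℝ) T, u t xbar = 0) :
    T * (1 - ε)^2 - 2 * ε * (1 + ε) ≤
      ∫ t in (0:ℝ)..T, ∫ x in (-ε)..ε,
        |deriv (fun τ => u τ x) t + deriv (fun y => (u t y)^2 / 2) x| := by
  obtain ⟨hε₀, hε₁⟩ := hε
  have hut (t x : ℝ) : ContinuousAt (u t) x :=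
    (hu.continuous.comp (Continuous.prodMk_right t)).continuousAt
  have hleft_half := le_integral_abs_burgersResidual_of_left_state hu hT.le hε₀ hε₁ hxbar.1.le
    (fun t ht => le_of_continuousAt_of_forall_lt (hut t _) fun x hx => (hleft t ht x hx).1)
    hzero
  have hright_half := le_integral_abs_burgersResidual_of_right_state hu hT.le hε₀ hε₁ hxbar.2.le
    hzero fun t ht => le_of_continuousAt_of_forall_gt (hut t _) fun x hx => by
      linarith [(hright t ht x hx).2]
  have hsplit := integral_integral_add_adjacent_intervals
    (F := fun t x => |burgersResidual u t x|) (continuous_burgersResidual hu).abs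
    0 T (-ε) xbar ε
  change _ ≤ ∫ t in (0:ℝ)..T, ∫ x in (-ε)..ε, |burgersResidual u t x|
  linarith
end
end
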